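/- arXiv:math/0505126 — 2 statements merged into one kernel-verified Lean document; each statement's English description precedes it below -/
import Mathlib

section
/- Let (H_ε)_{ε∈(0,1]} be a family of continuous functions on X × X (X ⊆ ℝ^d open) all supported in K × K for a fixed compact K ⊆ X, and suppose there is k ∈ ℕ such that sup |H_ε| ≤ k·ln(1/ε) for all small ε. Let L_{n,ε} be the iterated kernels of H_ε and S_ε = ∑_{n≥1} L_{n,ε}/n!. Then there is a constant C such that sup |S_ε| ≤ C·ε^{−k·Vol(K)} for ε small enough; i.e., (S_ε)_ε is a moderate net. -/
open MeasureTheory Filter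

/-- The filter `ε → 0⁺` with `ε ∈ (0,1]`. -/
noncomputable def lzero : Filter ℝ := nhdsWithin 0 (Set.Ioc 0 1)

theorem exponential_kernel_sum_moderate {d : ℕ}
    {X : Set (Fin d → ℝ)} {K : Set (Fin d → ℝ)} (hX : IsOpen X)
    (hK : IsCompact K) (hKX : K ⊆ X) (hV : 0 < volume K)
    (H : ℝ → (Fin d → ℝ) × (Fin d → ℝ) → ℂ)
    (hHc : ∀ ε ∈ Set.Ioc (0:ℝ) 1, Continuous (H ε))
    (hsupp : ∀ ε ∈ Set.Ioc (0:ℝ) 1, tsupport (H ε) ⊆ K ×ˢ K)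
    (k : ℕ)
    (hk : ∀ᶠ ε in lzero, ∀ z, ‖H ε z‖ ≤ (k : ℝ) * Real.log (1 / ε))
    (L : ℝ → ℕ → (Fin d → ℝ) × (Fin d → ℝ) → ℂ)
    (hL1 : ∀ ε, L ε 1 = H ε)
    (hLrec : ∀ ε, ∀ n ≥ 2, ∀ z : (Fin d → ℝ) × (Fin d → ℝ),
        L ε n z = ∫ ξ in K, L ε (n - 1) (z.1, ξ) * H ε (ξ, z.2))
    (S : ℝ → (Fin d → ℝ) × (Fin d → ℝ) → ℂ)
    (hS : ∀ ε z, S ε z = ∑' n : ℕ, L ε (n + 1) z / ((n + 1).factorial : ℂ)) :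
    ∃ C : ℝ, ∀ᶠ ε in lzero, ∀ z,
      ‖S ε z‖ ≤ C * Real.rpow ε (-((k : ℝ) * (volume K).toReal)) := by
  set V : ℝ := (volume K).toReal with hVdef
  have hKfin : volume K < ⊤ := hK.measure_lt_top
  have hV0 : 0 < V := ENNReal.toReal_pos hV.ne' hKfin.ne
  refine ⟨1 / V, ?_⟩
  have hmem : ∀ᶠ ε in lzero, ε ∈ Set.Ioc (0:ℝ) 1 := self_mem_nhdsWithin
  filter_upwards [hk, hmem] with ε hkε hε z
  set M : ℝ := (k : ℝ) * Real.log (1 / ε) with hMdef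
  have hε0 : 0 < ε := hε.1
  have hM0 : 0 ≤ M := by
    have : (0:ℝ) ≤ Real.log (1 / ε) := by
      apply Real.log_nonneg
      rw [le_div_iff₀ hε0]
      simpa using hε.2
    positivity
  -- iterated kernel bound
  have hbound : ∀ n : ℕ, ∀ z, ‖L ε (n + 1) z‖ ≤ V ^ n * M ^ (n + 1) := by
    intro n
    induction n with
    | zero => intro z; simpa [hL1 ε] using hkε z
    | succ m ih =>
      intro z
      have h2 : m + 2 ≥ 2 := by omega
      rw [hLrec ε (m + 2) h2 z]
      have key : ‖∫ ξ in K, L ε (m + 2 - 1) (z.1, ξ) * H ε (ξ, z.2)‖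
          ≤ (V ^ m * M ^ (m + 1) * M) * (volume K).toReal := by
        apply norm_setIntegral_le_of_norm_le_const_ae hKfin
        filter_upwards with ξ
        rw [norm_mul]
        have h1 : ‖L ε (m + 2 - 1) (z.1, ξ)‖ ≤ V ^ m * M ^ (m + 1) := by
          simpa using ih (z.1, ξ)
        have h2' : ‖H ε (ξ, z.2)‖ ≤ M := hkε _
        exact mul_le_mul h1 h2' (norm_nonneg _) (by positivity)
      calc ‖∫ ξ in K, L ε (m + 2 - 1) (z.1, ξ) * H ε (ξ, z.2)‖
          ≤ (V ^ m * M ^ (m + 1) * M) * V := key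
        _ = V ^ (m + 1) * M ^ (m + 1 + 1) := by ring
  -- summability of the majorant
  have hmaj : Summable (fun n : ℕ => V ^ n * M ^ (n + 1) / (n + 1).factorial) := by
    have h := Real.summable_pow_div_factorial (V * M)
    have h' : Summable (fun n : ℕ => (V * M) ^ (n + 1) / (n + 1).factorial) :=
      (summable_nat_add_iff 1).2 h
    have := h'.mul_left (1 / V)
    refine this.congr fun n => ?_
    field_simp
    ring
  have hterm : ∀ n : ℕ, ‖L ε (n + 1) z / ((n + 1).factorial : ℂ)‖
      ≤ V ^ n * M ^ (n + 1) / (n + 1).factorial := by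
    intro n
    rw [norm_div]
    apply div_le_div_of_nonneg_right (hbound n z) ?_ |>.trans_eq ?_
    · positivity
    · norm_num
  have hnorm : Summable (fun n : ℕ => ‖L ε (n + 1) z / ((n + 1).factorial : ℂ)‖) :=
    Summable.of_nonneg_of_le (fun n => norm_nonneg _) hterm hmaj
  -- bound the tsum
  rw [hS ε z]
  have h1 : ‖∑' n : ℕ, L ε (n + 1) z / ((n + 1).factorial : ℂ)‖
      ≤ ∑' n : ℕ, V ^ n * M ^ (n + 1) / (n + 1).factorial :=
    (norm_tsum_le_tsum_norm hnorm).trans (Summable.tsum_le_tsum hterm hnorm hmaj)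
  have h2 : ∑' n : ℕ, V ^ n * M ^ (n + 1) / (n + 1).factorial
      ≤ (1 / V) * Real.exp (V * M) := by
    apply Summable.tsum_le_of_sum_le hmaj
    intro s
    classical
    have hsub : s ⊆ Finset.range (s.sup id + 1) := fun i hi =>
      Finset.mem_range.2 (Nat.lt_succ_of_le (Finset.le_sup (f := id) hi))
    calc ∑ n ∈ s, V ^ n * M ^ (n + 1) / (n + 1).factorial
        ≤ ∑ n ∈ Finset.range (s.sup id + 1), V ^ n * M ^ (n + 1) / (n + 1).factorial := by
          apply Finset.sum_le_sum_of_subset_of_nonneg hsub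
          intro i _ _; positivity
      _ = (1 / V) * ∑ n ∈ Finset.range (s.sup id + 1), (V * M) ^ (n + 1) / (n + 1).factorial := by
          rw [Finset.mul_sum]
          apply Finset.sum_congr rfl
          intro i _
          field_simp
          ring
      _ ≤ (1 / V) * Real.exp (V * M) := by
          apply mul_le_mul_of_nonneg_left ?_ (by positivity)
          have : ∑ n ∈ Finset.range (s.sup id + 1), (V * M) ^ (n + 1) / (n + 1).factorial
              ≤ ∑ n ∈ Finset.range (s.sup id + 2), (V * M) ^ n / n.factorial := by
            rw [Finset.sum_range_succ' (fun n => (V * M) ^ n / (n.factorial : ℝ)) (s.sup id + 1)]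
            simp
          exact this.trans (Real.sum_le_exp_of_nonneg (by positivity) _)
  have h3 : Real.exp (V * M) = Real.rpow ε (-((k : ℝ) * V)) := by
    rw [show Real.rpow ε (-((k:ℝ) * V)) = ε ^ (-((k:ℝ) * V)) from rfl,
      Real.rpow_def_of_pos hε0]
    congr 1
    rw [hMdef, Real.log_div one_ne_zero hε0.ne', Real.log_one]
    ring
  calc ‖∑' n : ℕ, L ε (n + 1) z / ((n + 1).factorial : ℂ)‖
      ≤ (1 / V) * Real.exp (V * M) := h1.trans h2
    _ = 1 / V * Real.rpow ε (-((k : ℝ) * V)) := by rw [h3]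
end

section
/- Let (H_ε¹)_ε and (H_ε²)_ε be nets of continuous functions on X × X supported in K × K (K ⊆ X compact) with sup|H_ε^i| ≤ k|ln ε| for both i, and suppose sup|H_ε¹ − H_ε²| = O(ε^m) for every m ∈ ℕ. Let S_ε^i = ∑_{n≥1} L_{n,ε}^i / n! be the corresponding exponential kernel sums. Then sup|S_ε¹ − S_ε²| = O(ε^m) for every m ∈ ℕ. -/
/-!
Writing `V` for the volume of `K`, `M` for a common bound of `H¹, H²` and `D` for the sup of
`H¹ - H²`, induction on the recursion gives `‖Lⁱₙ‖ ≤ M (VM)ⁿ⁻¹` and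
`‖L¹ₙ - L²ₙ‖ ≤ n (VM)ⁿ⁻¹ D`; summing against `1 / n!` yields `‖S¹ - S²‖ ≤ D e^{VM}`.
With `M = k |log ε|` the factor `e^{VM} = ε^{-Vk}` only costs finitely many powers of `ε`,
which the rapid decay of `D` absorbs.
-/

open MeasureTheory Filter Asymptotics

open Real

def IsNegligible (f : ℝ → ℝ) : Prop := ∀ m : ℕ, f =O[lzero] fun ε => ε ^ m

theorem exp_mul_abs_log_le_inv_pow {ε c : ℝ} (hε : ε ∈ Set.Ioc (0 : ℝ) 1) {N : ℕ}
    (hcN : c ≤ N) : exp (c * |log ε|) ≤ ε⁻¹ ^ N := by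
  have hlog : |log ε| = log ε⁻¹ := by
    rw [log_inv, abs_of_nonpos (log_nonpos hε.1.le hε.2)]
  have hlog_nonneg : 0 ≤ log ε⁻¹ := hlog ▸ abs_nonneg _
  calc exp (c * |log ε|) ≤ exp (N * log ε⁻¹) := by
        rw [hlog]; gcongr
    _ = ε⁻¹ ^ N := by rw [exp_nat_mul, exp_log (inv_pos.2 hε.1)]

theorem IsNegligible.of_norm_le_mul_exp_mul_abs_log {f g : ℝ → ℝ} (hg : IsNegligible g)
    (c : ℝ) (hf : ∀ᶠ ε in lzero, ‖f ε‖ ≤ g ε * exp (c * |log ε|)) : IsNegligible f := by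
  intro m
  obtain ⟨N, hN⟩ := exists_nat_ge c
  have hε : ∀ᶠ ε in lzero, ε ∈ Set.Ioc (0 : ℝ) 1 := self_mem_nhdsWithin
  have hexp : (fun ε => exp (c * |log ε|)) =O[lzero] fun ε => ε⁻¹ ^ N := by
    refine .of_norm_eventuallyLE ?_
    filter_upwards [hε] with ε hε
    rw [norm_of_nonneg (exp_pos _).le]
    exact exp_mul_abs_log_le_inv_pow hε hN
  have hpow : (fun ε : ℝ => ε ^ (m + N) * ε⁻¹ ^ N) =ᶠ[lzero] fun ε => ε ^ m := by
    filter_upwards [hε] with ε hε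
    rw [pow_add, inv_pow, mul_assoc, mul_inv_cancel₀ (pow_pos hε.1 N).ne', mul_one]
  exact ((IsBigO.of_norm_eventuallyLE hf).trans ((hg (m + N)).mul hexp)).congr'
    EventuallyEq.rfl hpow

section Series

variable {𝕜 : Type*} [RCLike 𝕜]

theorem summable_div_factorial_succ {a : ℕ → 𝕜} {A c : ℝ} (ha : ∀ n, ‖a n‖ ≤ A * c ^ n) :
    Summable fun n => a n / ((n + 1).factorial : 𝕜) := by
  refine .of_norm_bounded ((summable_pow_div_factorial c).mul_left A) fun n => ?_
  rw [norm_div, RCLike.norm_natCast, mul_div_assoc']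
  exact div_le_div₀ ((norm_nonneg _).trans (ha n)) (ha n) (by positivity)
    (mod_cast Nat.factorial_le n.le_succ)

theorem norm_tsum_div_factorial_succ_sub_le {a b : ℕ → 𝕜} {A c D : ℝ}
    (ha : ∀ n, ‖a n‖ ≤ A * c ^ n) (hb : ∀ n, ‖b n‖ ≤ A * c ^ n)
    (hab : ∀ n, ‖a n - b n‖ ≤ (n + 1) * c ^ n * D) :
    ‖∑' n, a n / ((n + 1).factorial : 𝕜) - ∑' n, b n / ((n + 1).factorial : 𝕜)‖ ≤
      D * exp c := by
  have hterm : ∀ n, ‖a n / ((n + 1).factorial : 𝕜) - b n / ((n + 1).factorial : 𝕜)‖ ≤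
      D * (c ^ n / n.factorial) := fun n => by
    rw [← sub_div, norm_div, RCLike.norm_natCast, div_le_iff₀ (by positivity),
      Nat.factorial_succ, Nat.cast_mul, Nat.cast_succ]
    refine (hab n).trans_eq ?_
    field_simp
  have hexp : HasSum (fun n => D * (c ^ n / n.factorial)) (D * exp c) := by
    rw [exp_eq_exp_ℝ]
    exact (NormedSpace.expSeries_div_hasSum_exp c).mul_left D
  rw [← (summable_div_factorial_succ ha).tsum_sub (summable_div_factorial_succ hb)]
  exact tsum_of_norm_bounded hexp hterm

end Series

section IteratedKernel

variable {α 𝕜 : Type*} [MeasurableSpace α] [RCLike 𝕜] {μ : Measure α}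

/-- `L 0` is left unconstrained: the iterated kernels start at `L 1 = H`. -/
structure IsIteratedKernel (μ : Measure α) (H : α × α → 𝕜) (L : ℕ → α × α → 𝕜) : Prop where
  one : L 1 = H
  succ : ∀ n z, L (n + 2) z = ∫ ξ, L (n + 1) (z.1, ξ) * H (ξ, z.2) ∂μ

namespace IsIteratedKernel

variable {H H₁ H₂ : α × α → 𝕜} {L L₁ L₂ : ℕ → α × α → 𝕜} {M D : ℝ}

theorem stronglyMeasurable [SFinite μ] (h : IsIteratedKernel μ H L)
    (hH : StronglyMeasurable H) (n : ℕ) : StronglyMeasurable (L (n + 1)) := by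
  induction n with
  | zero => exact h.one ▸ hH
  | succ n ih =>
    rw [show L (n + 2) = _ from funext (h.succ n)]
    exact ((ih.comp_measurable (measurable_fst.fst.prodMk measurable_snd)).mul
      (hH.comp_measurable (measurable_snd.prodMk measurable_fst.snd))).integral_prod_right'

theorem norm_le [IsFiniteMeasure μ] (h : IsIteratedKernel μ H L) (hHM : ∀ z, ‖H z‖ ≤ M)
    (n : ℕ) (z : α × α) : ‖L (n + 1) z‖ ≤ M * (μ.real Set.univ * M) ^ n := by
  induction n generalizing z with
  | zero => simpa [h.one] using hHM z
  | succ n ih =>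
    rw [h.succ]
    refine (norm_integral_le_of_norm_le_const (.of_forall fun ξ => ?_)).trans_eq
      (by ring : M * (μ.real Set.univ * M) ^ n * M * μ.real Set.univ = _)
    exact norm_mul_le_of_le (ih _) (hHM _)

theorem integrable_mul [IsFiniteMeasure μ] (h : IsIteratedKernel μ H L)
    (hH : StronglyMeasurable H) (hHM : ∀ z, ‖H z‖ ≤ M) (n : ℕ) (x y : α) :
    Integrable (fun ξ => L (n + 1) (x, ξ) * H (ξ, y)) μ := by
  refine .of_bound (((h.stronglyMeasurable hH n).comp_measurable measurable_prodMk_left).mul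
    (hH.comp_measurable measurable_prodMk_right)).aestronglyMeasurable
    (M * (μ.real Set.univ * M) ^ n * M) (.of_forall fun ξ => ?_)
  exact norm_mul_le_of_le (h.norm_le hHM n _) (hHM _)

theorem norm_sub_le [IsFiniteMeasure μ] (h₁ : IsIteratedKernel μ H₁ L₁)
    (h₂ : IsIteratedKernel μ H₂ L₂) (hm₁ : StronglyMeasurable H₁) (hm₂ : StronglyMeasurable H₂)
    (hb₁ : ∀ z, ‖H₁ z‖ ≤ M) (hb₂ : ∀ z, ‖H₂ z‖ ≤ M) (hD : ∀ z, ‖H₁ z - H₂ z‖ ≤ D)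
    (n : ℕ) (z : α × α) :
    ‖L₁ (n + 1) z - L₂ (n + 1) z‖ ≤ (n + 1) * (μ.real Set.univ * M) ^ n * D := by
  induction n generalizing z with
  | zero => simpa [h₁.one, h₂.one] using hD z
  | succ n ih =>
    set V := μ.real Set.univ
    rw [h₁.succ, h₂.succ, ← integral_sub (h₁.integrable_mul hm₁ hb₁ n _ _)
      (h₂.integrable_mul hm₂ hb₂ n _ _)]
    refine (norm_integral_le_of_norm_le_const (C := (n + 1) * (V * M) ^ n * D * M +
      M * (V * M) ^ n * D) (.of_forall fun ξ => ?_)).trans_eq (by push_cast; ring)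
    rw [show L₁ (n + 1) (z.1, ξ) * H₁ (ξ, z.2) - L₂ (n + 1) (z.1, ξ) * H₂ (ξ, z.2) =
      (L₁ (n + 1) (z.1, ξ) - L₂ (n + 1) (z.1, ξ)) * H₁ (ξ, z.2) +
        L₂ (n + 1) (z.1, ξ) * (H₁ (ξ, z.2) - H₂ (ξ, z.2)) by ring]
    exact norm_add_le_of_le (norm_mul_le_of_le (ih _) (hb₁ _))
      (norm_mul_le_of_le (h₂.norm_le hb₂ n _) (hD _))

theorem norm_tsum_sub_le [IsFiniteMeasure μ] (h₁ : IsIteratedKernel μ H₁ L₁)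
    (h₂ : IsIteratedKernel μ H₂ L₂) (hm₁ : StronglyMeasurable H₁) (hm₂ : StronglyMeasurable H₂)
    (hb₁ : ∀ z, ‖H₁ z‖ ≤ M) (hb₂ : ∀ z, ‖H₂ z‖ ≤ M) (hD : ∀ z, ‖H₁ z - H₂ z‖ ≤ D)
    (z : α × α) :
    ‖∑' n, L₁ (n + 1) z / ((n + 1).factorial : 𝕜) -
        ∑' n, L₂ (n + 1) z / ((n + 1).factorial : 𝕜)‖ ≤ D * exp (μ.real Set.univ * M) :=
  norm_tsum_div_factorial_succ_sub_le (fun n => h₁.norm_le hb₁ n z) (fun n => h₂.norm_le hb₂ n z)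
    fun n => h₁.norm_sub_le h₂ hm₁ hm₂ hb₁ hb₂ hD n z

end IsIteratedKernel

end IteratedKernel

theorem exponential_kernel_sum_independent_of_representative_general {d : ℕ}
    {K : Set (Fin d → ℝ)} (hK : IsCompact K)
    (H₁ H₂ : ℝ → (Fin d → ℝ) × (Fin d → ℝ) → ℂ)
    (hH₁c : ∀ ε ∈ Set.Ioc (0:ℝ) 1, Continuous (H₁ ε))
    (hH₂c : ∀ ε ∈ Set.Ioc (0:ℝ) 1, Continuous (H₂ ε))
    (k : ℕ)
    (hk₁ : ∀ᶠ ε in lzero, ∀ z, ‖H₁ ε z‖ ≤ (k : ℝ) * |Real.log ε|)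
    (hk₂ : ∀ᶠ ε in lzero, ∀ z, ‖H₂ ε z‖ ≤ (k : ℝ) * |Real.log ε|)
    (hdiff : ∀ m : ℕ,
        (fun ε => ⨆ z, ‖H₁ ε z - H₂ ε z‖) =O[lzero] fun ε : ℝ => ε ^ m)
    (L₁ L₂ : ℝ → ℕ → (Fin d → ℝ) × (Fin d → ℝ) → ℂ)
    (hL₁1 : ∀ ε, L₁ ε 1 = H₁ ε) (hL₂1 : ∀ ε, L₂ ε 1 = H₂ ε)
    (hL₁rec : ∀ ε, ∀ n ≥ 2, ∀ z : (Fin d → ℝ) × (Fin d → ℝ),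
        L₁ ε n z = ∫ ξ in K, L₁ ε (n - 1) (z.1, ξ) * H₁ ε (ξ, z.2))
    (hL₂rec : ∀ ε, ∀ n ≥ 2, ∀ z : (Fin d → ℝ) × (Fin d → ℝ),
        L₂ ε n z = ∫ ξ in K, L₂ ε (n - 1) (z.1, ξ) * H₂ ε (ξ, z.2))
    (S₁ S₂ : ℝ → (Fin d → ℝ) × (Fin d → ℝ) → ℂ)
    (hS₁ : ∀ ε z, S₁ ε z = ∑' n : ℕ, L₁ ε (n + 1) z / ((n + 1).factorial : ℂ))
    (hS₂ : ∀ ε z, S₂ ε z = ∑' n : ℕ, L₂ ε (n + 1) z / ((n + 1).factorial : ℂ)) :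
    ∀ m : ℕ, (fun ε => ⨆ z, ‖S₁ ε z - S₂ ε z‖) =O[lzero] fun ε : ℝ => ε ^ m := by
  have : IsFiniteMeasure (volume.restrict K) := isFiniteMeasure_restrict.2 hK.measure_lt_top.ne
  refine IsNegligible.of_norm_le_mul_exp_mul_abs_log hdiff (volume.real K * k) ?_
  filter_upwards [hk₁, hk₂, (self_mem_nhdsWithin : Set.Ioc (0 : ℝ) 1 ∈ lzero)]
    with ε hb₁ hb₂ hε
  have iter₁ : IsIteratedKernel (volume.restrict K) (H₁ ε) (L₁ ε) :=
    ⟨hL₁1 ε, fun n => hL₁rec ε (n + 2) (by omega)⟩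
  have iter₂ : IsIteratedKernel (volume.restrict K) (H₂ ε) (L₂ ε) :=
    ⟨hL₂1 ε, fun n => hL₂rec ε (n + 2) (by omega)⟩
  have hD (z) : ‖H₁ ε z - H₂ ε z‖ ≤ ⨆ w, ‖H₁ ε w - H₂ ε w‖ :=
    le_ciSup ⟨_, Set.forall_mem_range.2 fun w => norm_sub_le_of_le (hb₁ w) (hb₂ w)⟩ z
  rw [norm_of_nonneg (Real.iSup_nonneg fun _ => norm_nonneg _), mul_assoc,
    ← measureReal_restrict_apply_univ]
  refine Real.iSup_le (fun z => ?_)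
    (mul_nonneg (Real.iSup_nonneg fun _ => norm_nonneg _) (exp_pos _).le)
  simpa only [hS₁, hS₂] using iter₁.norm_tsum_sub_le iter₂ (hH₁c ε hε).stronglyMeasurable
    (hH₂c ε hε).stronglyMeasurable hb₁ hb₂ hD z

theorem exponential_kernel_sum_independent_of_representative {d : ℕ}
    {X : Set (Fin d → ℝ)} {K : Set (Fin d → ℝ)} (hX : IsOpen X)
    (hK : IsCompact K) (hKX : K ⊆ X)
    (H₁ H₂ : ℝ → (Fin d → ℝ) × (Fin d → ℝ) → ℂ)
    (hH₁c : ∀ ε ∈ Set.Ioc (0:ℝ) 1, Continuous (H₁ ε))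
    (hH₂c : ∀ ε ∈ Set.Ioc (0:ℝ) 1, Continuous (H₂ ε))
    (hsupp₁ : ∀ ε ∈ Set.Ioc (0:ℝ) 1, tsupport (H₁ ε) ⊆ K ×ˢ K)
    (hsupp₂ : ∀ ε ∈ Set.Ioc (0:ℝ) 1, tsupport (H₂ ε) ⊆ K ×ˢ K)
    (k : ℕ)
    (hk₁ : ∀ᶠ ε in lzero, ∀ z, ‖H₁ ε z‖ ≤ (k : ℝ) * |Real.log ε|)
    (hk₂ : ∀ᶠ ε in lzero, ∀ z, ‖H₂ ε z‖ ≤ (k : ℝ) * |Real.log ε|)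
    (hdiff : ∀ m : ℕ,
        (fun ε => ⨆ z, ‖H₁ ε z - H₂ ε z‖) =O[lzero] fun ε : ℝ => ε ^ m)
    (L₁ L₂ : ℝ → ℕ → (Fin d → ℝ) × (Fin d → ℝ) → ℂ)
    (hL₁1 : ∀ ε, L₁ ε 1 = H₁ ε) (hL₂1 : ∀ ε, L₂ ε 1 = H₂ ε)
    (hL₁rec : ∀ ε, ∀ n ≥ 2, ∀ z : (Fin d → ℝ) × (Fin d → ℝ),
        L₁ ε n z = ∫ ξ in K, L₁ ε (n - 1) (z.1, ξ) * H₁ ε (ξ, z.2))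
    (hL₂rec : ∀ ε, ∀ n ≥ 2, ∀ z : (Fin d → ℝ) × (Fin d → ℝ),
        L₂ ε n z = ∫ ξ in K, L₂ ε (n - 1) (z.1, ξ) * H₂ ε (ξ, z.2))
    (S₁ S₂ : ℝ → (Fin d → ℝ) × (Fin d → ℝ) → ℂ)
    (hS₁ : ∀ ε z, S₁ ε z = ∑' n : ℕ, L₁ ε (n + 1) z / ((n + 1).factorial : ℂ))
    (hS₂ : ∀ ε z, S₂ ε z = ∑' n : ℕ, L₂ ε (n + 1) z / ((n + 1).factorial : ℂ)) :
    ∀ m : ℕ, (fun ε => ⨆ z, ‖S₁ ε z - S₂ ε z‖) =O[lzero] fun ε : ℝ => ε ^ m :=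
  exponential_kernel_sum_independent_of_representative_general hK H₁ H₂ hH₁c hH₂c k hk₁ hk₂ hdiff L₁
    L₂ hL₁1 hL₂1 hL₁rec hL₂rec S₁ S₂ hS₁ hS₂
end
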